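/- The coefficients r_n of the unique power series solution of r(x) = x·exp(Σ_{k≥1} r(x^k)/k) satisfy (n+1)·r_{n+2} = Σ_{k=0}^{n} (k+1)·(Σ_{d | k+1} r_{(k+1)/d}/d)·r_{n−k+1} with r_1 = 1, equivalently r_{n+1} can be computed from r_1,...,r_n; in particular r_1,...,r_{10} are 1, 1, 2, 4, 9, 20, 48, 115, 286, 719. -/

import Mathlib

open PowerSeries

/-- The formal exponential `exp f = ∑_{m≥0} f^m / m!` of a power series `f`
(intended for `f` with zero constant term, where only finitely many terms
contribute to each coefficient). -/
noncomputable def expPS (f : PowerSeries ℚ) : PowerSeries ℚ :=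
  PowerSeries.mk fun n =>
    PowerSeries.coeff n (∑ m ∈ Finset.range (n + 1), (Nat.factorial m : ℚ)⁻¹ • f ^ m)

/-- The substitution `f(x^k)` of `x^k` into the power series `f` (for `k ≥ 1`). -/
noncomputable def compXPow (f : PowerSeries ℚ) (k : ℕ) : PowerSeries ℚ :=
  PowerSeries.mk fun n => if k ∣ n then PowerSeries.coeff (n / k) f else 0

/-- The sum `∑_{k≥1} f(x^k)/k`, for `f` with zero constant term: its `n`-th
coefficient is `∑_{k ∣ n} (coeff (n/k) f)/k`. -/
noncomputable def dsum (f : PowerSeries ℚ) : PowerSeries ℚ :=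
  PowerSeries.mk fun n => ∑ k ∈ n.divisors, (k : ℚ)⁻¹ * PowerSeries.coeff (n / k) f

/-- The generating function `A(x) = ∑_{a ∈ 𝒜} x^{s a}`: coefficient of `x^n` is the
number of elements of size `n`. -/
noncomputable def genFun {α : Type*} (s : α → ℕ) : PowerSeries ℚ :=
  PowerSeries.mk fun n => (Nat.card {a : α // s a = n} : ℚ)

/-!
Put `D = dsum r` and `E = expPS D`, so that `r = X * E` and `coeff (m + 1) r = coeff m E`.
As `D` has no constant term, `E` is the composition `exp ∘ D`, and the chain rule gives
`E' = D' * E`; comparing coefficients yields `(n + 1) e_{n+1} = ∑_k (k + 1) d_{k+1} e_{n-k}`,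
which is the recurrence once `e_m = r_{m+1}` and `d_k = ∑_{d ∣ k} r_{k/d} / d` are substituted.
The recurrence determines `r_{n+2}` from `r_1, …, r_{n+1}`, so the first ten coefficients are
obtained by running it.
-/

open Finset

lemma expPS_eq_subst_exp {D : ℚ⟦X⟧} (hD : constantCoeff D = 0) :
    expPS D = (exp ℚ).subst D := by
  ext n
  have hpow : ∀ m, n < m → coeff n (D ^ m) = 0 := fun m hm =>
    coeff_of_lt_order _ ((Nat.cast_lt.mpr hm).trans_le (le_order_pow_of_constantCoeff_eq_zero m hD))
  rw [expPS, coeff_mk, coeff_subst' (HasSubst.of_constantCoeff_zero' hD),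
    finsum_eq_sum_of_support_subset (s := range (n + 1)), map_sum]
  · simp [coeff_exp]
  · intro m hm
    by_contra hmn
    exact hm (by simp only [hpow m (by simp at hmn; omega), smul_zero])

lemma derivative_expPS {D : ℚ⟦X⟧} (hD : constantCoeff D = 0) :
    d⁄dX ℚ (expPS D) = d⁄dX ℚ D * expPS D := by
  rw [expPS_eq_subst_exp hD, derivative_subst (HasSubst.of_constantCoeff_zero' hD),
    derivative_exp, mul_comm]

lemma coeff_succ_expPS {D : ℚ⟦X⟧} (hD : constantCoeff D = 0) (n : ℕ) :
    ((n : ℚ) + 1) * coeff (n + 1) (expPS D)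
      = ∑ k ∈ range (n + 1), ((k : ℚ) + 1) * coeff (k + 1) D * coeff (n - k) (expPS D) := by
  rw [mul_comm, ← coeff_derivative, derivative_expPS hD, coeff_mul,
    Nat.sum_antidiagonal_eq_sum_range_succ_mk]
  refine sum_congr rfl fun k _ => ?_
  rw [coeff_derivative]
  ring

lemma coeff_dsum (f : ℚ⟦X⟧) (n : ℕ) :
    coeff n (dsum f) = ∑ d ∈ n.divisors, coeff (n / d) f / d := by
  simp only [dsum, coeff_mk, div_eq_inv_mul]

lemma constantCoeff_dsum (f : ℚ⟦X⟧) : constantCoeff (dsum f) = 0 := by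
  rw [← coeff_zero_eq_constantCoeff_apply, coeff_dsum, Nat.divisors_zero, sum_empty]

lemma coeff_zero_expPS (D : ℚ⟦X⟧) : coeff 0 (expPS D) = 1 := by
  simp [expPS]

lemma coeff_two_add_of_eq_X_mul_expPS_dsum {r : ℚ⟦X⟧} (hr : r = X * expPS (dsum r)) (n : ℕ) :
    ((n : ℚ) + 1) * coeff (n + 2) r
      = ∑ k ∈ range (n + 1), ((k : ℚ) + 1)
          * (∑ d ∈ (k + 1).divisors, coeff ((k + 1) / d) r / (d : ℚ)) * coeff (n - k + 1) r := by
  have hshift : ∀ m, coeff (m + 1) r = coeff m (expPS (dsum r)) := fun m => by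
    rw [hr, coeff_succ_X_mul, ← hr]
  simp only [hshift, coeff_succ_expPS (constantCoeff_dsum r), coeff_dsum]

/-- The recurrence solved for `a (n + 2)`. -/
def rootedNext (a : ℕ → ℚ) (n : ℕ) : ℚ :=
  (∑ k ∈ range (n + 1), ((k : ℚ) + 1) * (∑ d ∈ (k + 1).divisors, a ((k + 1) / d) / d)
    * a (n - k + 1)) / (n + 1)

lemma rootedNext_congr {a b : ℕ → ℚ} {n : ℕ} (h : ∀ i ≤ n + 1, a i = b i) :
    rootedNext a n = rootedNext b n := by
  unfold rootedNext
  refine congrArg (· / _) (sum_congr rfl fun k hk => ?_)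
  have hk : k ≤ n := Nat.lt_succ_iff.mp (mem_range.mp hk)
  rw [h (n - k + 1) (by omega)]
  congr 2
  refine sum_congr rfl fun d _ => ?_
  rw [h _ ((Nat.div_le_self _ _).trans (by omega))]

/-- The list `[a 0, a 1, …, a (n + 1)]` of any `a` with `a 0 = 0`, `a 1 = 1` and
`a (m + 2) = rootedNext a m`, computed by the recurrence. -/
def rootedList : ℕ → List ℚ
  | 0 => [0, 1]
  | n + 1 => rootedList n ++ [rootedNext (fun i => (rootedList n).getD i 0) n]

lemma length_rootedList (n : ℕ) : (rootedList n).length = n + 2 := by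
  induction n with
  | zero => rfl
  | succ n ih => simp [rootedList, ih]

lemma getD_rootedList {a : ℕ → ℚ} (h0 : a 0 = 0) (h1 : a 1 = 1)
    (hnext : ∀ m, a (m + 2) = rootedNext a m) (n : ℕ) :
    ∀ i ≤ n + 1, (rootedList n).getD i 0 = a i := by
  induction n with
  | zero =>
    intro i hi
    interval_cases i <;> simp [rootedList, h0, h1]
  | succ n ih =>
    intro i hi
    rcases Nat.lt_or_eq_of_le hi with hi | rfl
    · rw [rootedList, List.getD_append _ _ _ _ (by rw [length_rootedList]; omega),
        ih i (by omega)]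
    · rw [rootedList, List.getD_append_right _ _ _ _ (by rw [length_rootedList]),
        length_rootedList, Nat.sub_self, List.getD_cons_zero, rootedNext_congr ih, hnext]

/-- The coefficients of the unique power series solution of
`r(x) = x·exp(∑_{k≥1} r(x^k)/k)` satisfy the recurrence
`(n+1)·r_{n+2} = ∑_{k=0}^{n} (k+1)·(∑_{d ∣ k+1} r_{(k+1)/d}/d)·r_{n-k+1}` with
`r_1 = 1`; in particular `r_1, ..., r_10` are 1, 1, 2, 4, 9, 20, 48, 115, 286, 719. -/
theorem rooted_coeff_recurrence (r : PowerSeries ℚ)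
    (h0 : PowerSeries.coeff 0 r = 0)
    (hr : r = PowerSeries.X * expPS (dsum r)) :
    (PowerSeries.coeff 1 r = 1
      ∧ ∀ n : ℕ, ((n : ℚ) + 1) * PowerSeries.coeff (n + 2) r
          = ∑ k ∈ Finset.range (n + 1), ((k : ℚ) + 1)
              * (∑ d ∈ (k + 1).divisors, PowerSeries.coeff ((k + 1) / d) r / (d : ℚ))
              * PowerSeries.coeff (n - k + 1) r)
    ∧ (List.ofFn fun i : Fin 10 => PowerSeries.coeff ((i : ℕ) + 1) r)
        = [1, 1, 2, 4, 9, 20, 48, 115, 286, 719] := by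
  have h1 : coeff 1 r = 1 := by rw [hr, coeff_succ_X_mul, coeff_zero_expPS]
  have hrec := coeff_two_add_of_eq_X_mul_expPS_dsum hr
  have hnext : ∀ m, coeff (m + 2) r = rootedNext (fun i => coeff i r) m := fun m =>
    eq_div_of_mul_eq (by positivity) ((mul_comm _ _).trans (hrec m))
  refine ⟨⟨h1, hrec⟩, ?_⟩
  calc (List.ofFn fun i : Fin 10 => coeff ((i : ℕ) + 1) r)
      = List.ofFn fun i : Fin 10 => (rootedList 9).getD ((i : ℕ) + 1) 0 := by
        congr 1
        funext i
        rw [getD_rootedList (a := fun i => coeff i r) h0 h1 hnext 9 _ (by omega)]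
    _ = [1, 1, 2, 4, 9, 20, 48, 115, 286, 719] := by decide +kernel
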